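/- arXiv:1702.07757 — 3 statements merged into one kernel-verified Lean document; each statement's English description precedes it below -/
import Mathlib

section
/- Let k ≥ 1 be an integer and C ≥ 1. There exists a constant C′ depending only on C and k such that: for all real numbers H, h with 0 < h ≤ H ≤ 1 and all nonnegative reals b₀, t₀, p₁, a₁, s₁, q₁, b₁, t₁ satisfying b₀ ≤ C·H^k, t₀ ≤ C·H^{k+1}, p₁ ≤ C(H·b₀ + t₀ + h^k), a₁ ≤ C(p₁ + b₀² + h^k), s₁ ≤ C(h·a₁ + b₀·t₀ + h^{k+1}), q₁ ≤ C(h·a₁ + s₁ + h^k), b₁ ≤ C(q₁ + a₁·b₀ + h^k), and t₁ ≤ C(h·b₁ + h·b₀·a₁ + t₀·a₁ + h^{k+1}), one has: p₁ + a₁ ≤ C′(H^{k+1} + h^k), s₁ ≤ C′(H^{2k+1} + H^{k+1}h + h^{k+1}), q₁ + b₁ ≤ C′(H^{2k+1} + H^{k+1}h + h^k), and t₁ ≤ C′(H^{k+1}h² + H^{k+1}h^k + H^{2(k+1)} + h^{k+1}). -/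
/-- Abstract error-propagation system for the two-level decoupled Algorithm A
(Lemma 4.1): from the recursive inequalities one deduces the two-level error
estimates with a constant `C'` depending only on `C` and `k`. -/
theorem two_level_error_estimates (k : ℕ) (hk : 1 ≤ k) (C : ℝ) (hC : 1 ≤ C) :
    ∃ C' : ℝ, ∀ H h b₀ t₀ p₁ a₁ s₁ q₁ b₁ t₁ : ℝ,
      0 < h → h ≤ H → H ≤ 1 →
      0 ≤ b₀ → 0 ≤ t₀ → 0 ≤ p₁ → 0 ≤ a₁ → 0 ≤ s₁ → 0 ≤ q₁ → 0 ≤ b₁ → 0 ≤ t₁ →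
      b₀ ≤ C * H ^ k →
      t₀ ≤ C * H ^ (k + 1) →
      p₁ ≤ C * (H * b₀ + t₀ + h ^ k) →
      a₁ ≤ C * (p₁ + b₀ ^ 2 + h ^ k) →
      s₁ ≤ C * (h * a₁ + b₀ * t₀ + h ^ (k + 1)) →
      q₁ ≤ C * (h * a₁ + s₁ + h ^ k) →
      b₁ ≤ C * (q₁ + a₁ * b₀ + h ^ k) →
      t₁ ≤ C * (h * b₁ + h * b₀ * a₁ + t₀ * a₁ + h ^ (k + 1)) →
      p₁ + a₁ ≤ C' * (H ^ (k + 1) + h ^ k) ∧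
      s₁ ≤ C' * (H ^ (2 * k + 1) + H ^ (k + 1) * h + h ^ (k + 1)) ∧
      q₁ + b₁ ≤ C' * (H ^ (2 * k + 1) + H ^ (k + 1) * h + h ^ k) ∧
      t₁ ≤ C' * (H ^ (k + 1) * h ^ 2 + H ^ (k + 1) * h ^ k + H ^ (2 * (k + 1)) + h ^ (k + 1)) := by
  refine ⟨30 * C ^ 7, ?_⟩
  intro H h b₀ t₀ p₁ a₁ s₁ q₁ b₁ t₁ hh hhH hH1 hb₀0 ht₀0 hp₁0 ha₁0 hs₁0 hq₁0 hb₁0 ht₁0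
    hb₀ ht₀ hp ha hs hq hb ht
  have hC0 : (0:ℝ) ≤ C := by linarith
  have hH0 : (0:ℝ) < H := hh.trans_le hhH
  have hh1 : h ≤ 1 := hhH.trans hH1
  have hHk0 : (0:ℝ) ≤ H ^ k := pow_nonneg hH0.le k
  have hX0 : (0:ℝ) ≤ H ^ (k + 1) := pow_nonneg hH0.le _
  have hY0 : (0:ℝ) ≤ h ^ k := pow_nonneg hh.le k
  have hk10 : (0:ℝ) ≤ h ^ (k + 1) := pow_nonneg hh.le _
  have hZ0 : (0:ℝ) ≤ H ^ (2 * k + 1) := pow_nonneg hH0.le _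
  have hW0 : (0:ℝ) ≤ H ^ (2 * (k + 1)) := pow_nonneg hH0.le _
  have hXh0 : (0:ℝ) ≤ H ^ (k + 1) * h := mul_nonneg hX0 hh.le
  have hXh20 : (0:ℝ) ≤ H ^ (k + 1) * h ^ 2 := by positivity
  have hXY0 : (0:ℝ) ≤ H ^ (k + 1) * h ^ k := mul_nonneg hX0 hY0
  have hHk1 : H ^ k ≤ 1 := pow_le_one₀ hH0.le hH1
  have hhk : h ^ (k + 1) ≤ h ^ k := pow_le_pow_of_le_one hh.le hh1 (by omega)
  have hH2k : H ^ (2 * k) ≤ H ^ (k + 1) := pow_le_pow_of_le_one hH0.le hH1 (by omega)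
  have eX : H ^ (k + 1) = H ^ k * H := pow_succ H k
  have eYs : h ^ (k + 1) = h ^ k * h := pow_succ h k
  have eZ : H ^ k * H ^ (k + 1) = H ^ (2 * k + 1) := by
    rw [← pow_add]; congr 1; omega
  have eW : H ^ (k + 1) * H ^ (k + 1) = H ^ (2 * (k + 1)) := by
    rw [← pow_add]; congr 1; omega
  have eW' : H ^ (2 * k + 1) * H = H ^ (2 * (k + 1)) := by
    have e : 2 * k + 1 + 1 = 2 * (k + 1) := by omega
    rw [← pow_succ, e]
  have hZh : H ^ (2 * k + 1) * h ≤ H ^ (2 * (k + 1)) := by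
    calc H ^ (2 * k + 1) * h ≤ H ^ (2 * k + 1) * H :=
          mul_le_mul_of_nonneg_left hhH hZ0
      _ = H ^ (2 * (k + 1)) := eW'
  -- powers of C
  have hCn0 : ∀ n : ℕ, (0:ℝ) ≤ C ^ n := fun n => pow_nonneg hC0 n
  have hCC : ∀ m n : ℕ, m ≤ n → C ^ m ≤ C ^ n := fun m n hmn => pow_le_pow_right₀ hC hmn
  have hC12 : C ≤ C ^ 2 := by calc C = C ^ 1 := (pow_one C).symm
    _ ≤ C ^ 2 := hCC 1 2 (by norm_num)
  have hC13 : C ≤ C ^ 3 := by calc C = C ^ 1 := (pow_one C).symm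
    _ ≤ C ^ 3 := hCC 1 3 (by norm_num)
  have hC14 : C ≤ C ^ 4 := by calc C = C ^ 1 := (pow_one C).symm
    _ ≤ C ^ 4 := hCC 1 4 (by norm_num)
  have hC15 : C ≤ C ^ 5 := by calc C = C ^ 1 := (pow_one C).symm
    _ ≤ C ^ 5 := hCC 1 5 (by norm_num)
  have hC16 : C ≤ C ^ 6 := by calc C = C ^ 1 := (pow_one C).symm
    _ ≤ C ^ 6 := hCC 1 6 (by norm_num)
  have hC17 : C ≤ C ^ 7 := by calc C = C ^ 1 := (pow_one C).symm
    _ ≤ C ^ 7 := hCC 1 7 (by norm_num)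
  -- H * b₀ ≤ C * H^(k+1), h * b₀ ≤ C * H^(k+1)
  have hHb : H * b₀ ≤ C * H ^ (k + 1) := by
    calc H * b₀ ≤ H * (C * H ^ k) := mul_le_mul_of_nonneg_left hb₀ hH0.le
      _ = C * H ^ (k + 1) := by rw [eX]; ring
  have hhb₀ : h * b₀ ≤ C * H ^ (k + 1) := by
    calc h * b₀ ≤ H * b₀ := mul_le_mul_of_nonneg_right hhH hb₀0
      _ ≤ C * H ^ (k + 1) := hHb
  -- Step 1 : p₁ ≤ 2C²(X + Y)
  have B1 : p₁ ≤ 2 * C ^ 2 * (H ^ (k + 1) + h ^ k) := by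
    have d : (0:ℝ) ≤ 2 * C ^ 2 - C := by linarith [hC12, hCn0 2]
    calc p₁ ≤ C * (H * b₀ + t₀ + h ^ k) := hp
      _ ≤ C * (C * H ^ (k + 1) + C * H ^ (k + 1) + h ^ k) := by
          apply mul_le_mul_of_nonneg_left _ hC0; linarith
      _ ≤ 2 * C ^ 2 * (H ^ (k + 1) + h ^ k) := by
          linarith [mul_nonneg d hY0]
  -- Step 2 : a₁ ≤ 4C³(X + Y)
  have hbsq : b₀ ^ 2 ≤ C ^ 2 * H ^ (k + 1) := by
    have h1 : b₀ ^ 2 ≤ (C * H ^ k) ^ 2 := pow_le_pow_left₀ hb₀0 hb₀ 2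
    have h2 : (C * H ^ k) ^ 2 = C ^ 2 * H ^ (2 * k) := by
      rw [mul_pow, ← pow_mul]; congr 2; omega
    calc b₀ ^ 2 ≤ C ^ 2 * H ^ (2 * k) := h2 ▸ h1
      _ ≤ C ^ 2 * H ^ (k + 1) := mul_le_mul_of_nonneg_left hH2k (hCn0 2)
  have B2 : a₁ ≤ 4 * C ^ 3 * (H ^ (k + 1) + h ^ k) := by
    have d1 : (0:ℝ) ≤ 2 * C ^ 3 - C := by linarith [hC13, hCn0 3]
    calc a₁ ≤ C * (p₁ + b₀ ^ 2 + h ^ k) := ha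
      _ ≤ C * (2 * C ^ 2 * (H ^ (k + 1) + h ^ k) + C ^ 2 * H ^ (k + 1) + h ^ k) := by
          apply mul_le_mul_of_nonneg_left _ hC0; linarith
      _ ≤ 4 * C ^ 3 * (H ^ (k + 1) + h ^ k) := by
          linarith [mul_nonneg d1 hY0, mul_nonneg (hCn0 3) hX0]
  -- First conclusion
  have conc1 : p₁ + a₁ ≤ 30 * C ^ 7 * (H ^ (k + 1) + h ^ k) := by
    have d : (0:ℝ) ≤ 30 * C ^ 7 - 2 * C ^ 2 - 4 * C ^ 3 := by
      linarith [hCC 2 7 (by norm_num), hCC 3 7 (by norm_num), hCn0 7]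
    linarith [mul_nonneg d hX0, mul_nonneg d hY0]
  -- Step 3 : s₁ ≤ 6C⁴(Z + Xh + h^(k+1))
  have hha : h * a₁ ≤ 4 * C ^ 3 * (H ^ (k + 1) * h + h ^ (k + 1)) := by
    calc h * a₁ ≤ h * (4 * C ^ 3 * (H ^ (k + 1) + h ^ k)) :=
          mul_le_mul_of_nonneg_left B2 hh.le
      _ = 4 * C ^ 3 * (H ^ (k + 1) * h + h ^ (k + 1)) := by rw [eYs]; ring
  have hbt : b₀ * t₀ ≤ C ^ 2 * H ^ (2 * k + 1) := by
    calc b₀ * t₀ ≤ (C * H ^ k) * (C * H ^ (k + 1)) :=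
          mul_le_mul hb₀ ht₀ ht₀0 (by positivity)
      _ = C ^ 2 * (H ^ k * H ^ (k + 1)) := by ring
      _ = C ^ 2 * H ^ (2 * k + 1) := by rw [eZ]
  have B3 : s₁ ≤ 6 * C ^ 4 * (H ^ (2 * k + 1) + H ^ (k + 1) * h + h ^ (k + 1)) := by
    have d1 : (0:ℝ) ≤ 6 * C ^ 4 - C ^ 3 := by linarith [hCC 3 4 (by norm_num), hCn0 4]
    have d2 : (0:ℝ) ≤ 2 * C ^ 4 - C := by linarith [hC14, hCn0 4]
    calc s₁ ≤ C * (h * a₁ + b₀ * t₀ + h ^ (k + 1)) := hs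
      _ ≤ C * (4 * C ^ 3 * (H ^ (k + 1) * h + h ^ (k + 1)) + C ^ 2 * H ^ (2 * k + 1)
            + h ^ (k + 1)) := by
          apply mul_le_mul_of_nonneg_left _ hC0; linarith
      _ ≤ 6 * C ^ 4 * (H ^ (2 * k + 1) + H ^ (k + 1) * h + h ^ (k + 1)) := by
          linarith [mul_nonneg d1 hZ0, mul_nonneg (hCn0 4) hXh0, mul_nonneg d2 hk10]
  have conc2 : s₁ ≤ 30 * C ^ 7 * (H ^ (2 * k + 1) + H ^ (k + 1) * h + h ^ (k + 1)) := by
    have d : (0:ℝ) ≤ 30 * C ^ 7 - 6 * C ^ 4 := by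
      linarith [hCC 4 7 (by norm_num), hCn0 7]
    linarith [mul_nonneg d hZ0, mul_nonneg d hXh0, mul_nonneg d hk10]
  -- Step 4 : q₁ ≤ 12C⁵(Z + Xh + Y)
  have B4 : q₁ ≤ 12 * C ^ 5 * (H ^ (2 * k + 1) + H ^ (k + 1) * h + h ^ k) := by
    have d1 : (0:ℝ) ≤ 6 * C ^ 5 - 4 * C ^ 4 - C := by
      linarith [hCC 4 5 (by norm_num), hC15, hCn0 5]
    calc q₁ ≤ C * (h * a₁ + s₁ + h ^ k) := hq
      _ ≤ C * (4 * C ^ 3 * (H ^ (k + 1) * h + h ^ (k + 1))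
            + 6 * C ^ 4 * (H ^ (2 * k + 1) + H ^ (k + 1) * h + h ^ (k + 1)) + h ^ k) := by
          apply mul_le_mul_of_nonneg_left _ hC0; linarith
      _ ≤ 12 * C ^ 5 * (H ^ (2 * k + 1) + H ^ (k + 1) * h + h ^ k) := by
          linarith [mul_nonneg (hCn0 5) hZ0,
            mul_nonneg (show (0:ℝ) ≤ 6 * C ^ 5 - 4 * C ^ 4 by
              linarith [hCC 4 5 (by norm_num), hCn0 5]) hXh0,
            mul_nonneg (show (0:ℝ) ≤ 4 * C ^ 4 by linarith [hCn0 4]) (sub_nonneg.2 hhk),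
            mul_nonneg (show (0:ℝ) ≤ 6 * C ^ 5 by linarith [hCn0 5]) (sub_nonneg.2 hhk),
            mul_nonneg d1 hY0]
  -- Step 5 : b₁ ≤ 17C⁶(Z + Xh + Y)
  have hab : a₁ * b₀ ≤ 4 * C ^ 4 * (H ^ (2 * k + 1) + h ^ k) := by
    have e1 : (0:ℝ) ≤ 4 * C ^ 4 := by linarith [hCn0 4]
    have e2 : h ^ k * H ^ k ≤ h ^ k * 1 := mul_le_mul_of_nonneg_left hHk1 hY0
    calc a₁ * b₀ ≤ (4 * C ^ 3 * (H ^ (k + 1) + h ^ k)) * (C * H ^ k) :=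
          mul_le_mul B2 hb₀ hb₀0 (by positivity)
      _ = 4 * C ^ 4 * (H ^ k * H ^ (k + 1)) + 4 * C ^ 4 * (h ^ k * H ^ k) := by ring
      _ = 4 * C ^ 4 * H ^ (2 * k + 1) + 4 * C ^ 4 * (h ^ k * H ^ k) := by rw [eZ]
      _ ≤ 4 * C ^ 4 * (H ^ (2 * k + 1) + h ^ k) := by linarith [mul_nonneg e1 (sub_nonneg.2 e2)]
  have B5 : b₁ ≤ 17 * C ^ 6 * (H ^ (2 * k + 1) + H ^ (k + 1) * h + h ^ k) := by
    have d1 : (0:ℝ) ≤ 5 * C ^ 6 - 4 * C ^ 5 := by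
      linarith [hCC 5 6 (by norm_num), hCn0 6]
    have d2 : (0:ℝ) ≤ 5 * C ^ 6 - 4 * C ^ 5 - C := by
      linarith [hCC 5 6 (by norm_num), hC16, hCn0 6]
    calc b₁ ≤ C * (q₁ + a₁ * b₀ + h ^ k) := hb
      _ ≤ C * (12 * C ^ 5 * (H ^ (2 * k + 1) + H ^ (k + 1) * h + h ^ k)
            + 4 * C ^ 4 * (H ^ (2 * k + 1) + h ^ k) + h ^ k) := by
          apply mul_le_mul_of_nonneg_left _ hC0; linarith
      _ ≤ 17 * C ^ 6 * (H ^ (2 * k + 1) + H ^ (k + 1) * h + h ^ k) := by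
          linarith [mul_nonneg d1 hZ0, mul_nonneg (show (0:ℝ) ≤ 5 * C ^ 6 by
            linarith [hCn0 6]) hXh0, mul_nonneg d2 hY0]
  have conc3 : q₁ + b₁ ≤ 30 * C ^ 7 * (H ^ (2 * k + 1) + H ^ (k + 1) * h + h ^ k) := by
    have d : (0:ℝ) ≤ 30 * C ^ 7 - 12 * C ^ 5 - 17 * C ^ 6 := by
      linarith [hCC 5 7 (by norm_num), hCC 6 7 (by norm_num), hCn0 7]
    linarith [mul_nonneg d hZ0, mul_nonneg d hXh0, mul_nonneg d hY0]
  -- Step 6 : t₁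
  have hhb : h * b₁ ≤ 17 * C ^ 6 * (H ^ (2 * (k + 1)) + H ^ (k + 1) * h ^ 2 + h ^ (k + 1)) := by
    have e1 : (0:ℝ) ≤ 17 * C ^ 6 := by linarith [hCn0 6]
    calc h * b₁ ≤ h * (17 * C ^ 6 * (H ^ (2 * k + 1) + H ^ (k + 1) * h + h ^ k)) :=
          mul_le_mul_of_nonneg_left B5 hh.le
      _ = 17 * C ^ 6 * (H ^ (2 * k + 1) * h + H ^ (k + 1) * h ^ 2 + h ^ (k + 1)) := by
          rw [eYs]; ring
      _ ≤ 17 * C ^ 6 * (H ^ (2 * (k + 1)) + H ^ (k + 1) * h ^ 2 + h ^ (k + 1)) := by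
          linarith [mul_nonneg e1 (sub_nonneg.2 hZh)]
  have hba : h * b₀ * a₁ ≤ 4 * C ^ 4 * (H ^ (2 * (k + 1)) + H ^ (k + 1) * h ^ k) := by
    calc h * b₀ * a₁ ≤ (C * H ^ (k + 1)) * (4 * C ^ 3 * (H ^ (k + 1) + h ^ k)) :=
          mul_le_mul hhb₀ B2 ha₁0 (by positivity)
      _ = 4 * C ^ 4 * (H ^ (k + 1) * H ^ (k + 1)) + 4 * C ^ 4 * (H ^ (k + 1) * h ^ k) := by
          ring
      _ = 4 * C ^ 4 * (H ^ (2 * (k + 1)) + H ^ (k + 1) * h ^ k) := by rw [eW]; ring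
  have hta : t₀ * a₁ ≤ 4 * C ^ 4 * (H ^ (2 * (k + 1)) + H ^ (k + 1) * h ^ k) := by
    calc t₀ * a₁ ≤ (C * H ^ (k + 1)) * (4 * C ^ 3 * (H ^ (k + 1) + h ^ k)) :=
          mul_le_mul ht₀ B2 ha₁0 (by positivity)
      _ = 4 * C ^ 4 * (H ^ (k + 1) * H ^ (k + 1)) + 4 * C ^ 4 * (H ^ (k + 1) * h ^ k) := by
          ring
      _ = 4 * C ^ 4 * (H ^ (2 * (k + 1)) + H ^ (k + 1) * h ^ k) := by rw [eW]; ring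
  have conc4 : t₁ ≤ 30 * C ^ 7 * (H ^ (k + 1) * h ^ 2 + H ^ (k + 1) * h ^ k
      + H ^ (2 * (k + 1)) + h ^ (k + 1)) := by
    have d1 : (0:ℝ) ≤ 13 * C ^ 7 - 8 * C ^ 5 := by
      linarith [hCC 5 7 (by norm_num), hCn0 7]
    have d2 : (0:ℝ) ≤ 30 * C ^ 7 - 8 * C ^ 5 := by
      linarith [hCC 5 7 (by norm_num), hCn0 7]
    have d3 : (0:ℝ) ≤ 13 * C ^ 7 - C := by linarith [hC17, hCn0 7]
    calc t₁ ≤ C * (h * b₁ + h * b₀ * a₁ + t₀ * a₁ + h ^ (k + 1)) := ht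
      _ ≤ C * (17 * C ^ 6 * (H ^ (2 * (k + 1)) + H ^ (k + 1) * h ^ 2 + h ^ (k + 1))
            + 4 * C ^ 4 * (H ^ (2 * (k + 1)) + H ^ (k + 1) * h ^ k)
            + 4 * C ^ 4 * (H ^ (2 * (k + 1)) + H ^ (k + 1) * h ^ k) + h ^ (k + 1)) := by
          apply mul_le_mul_of_nonneg_left _ hC0; linarith
      _ ≤ 30 * C ^ 7 * (H ^ (k + 1) * h ^ 2 + H ^ (k + 1) * h ^ k + H ^ (2 * (k + 1))
            + h ^ (k + 1)) := by
          linarith [mul_nonneg d1 hW0, mul_nonneg (show (0:ℝ) ≤ 13 * C ^ 7 by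
              linarith [hCn0 7]) hXh20, mul_nonneg d2 hXY0, mul_nonneg d3 hk10]
  exact ⟨conc1, conc2, conc3, conc4⟩
end

section
/- Let k ∈ {1,2} and C ≥ 1. There exists a constant C″ depending only on C and k such that: for all real numbers H, h with 0 < H ≤ 1 and h = H^{(2k+1)/k} (i.e., h = H³ for k = 1 and h = H^{5/2} for k = 2) and all nonnegative reals b₀, t₀, p₁, a₁, s₁, q₁, b₁, t₁ satisfying b₀ ≤ C·H^k, t₀ ≤ C·H^{k+1}, p₁ ≤ C(H·b₀ + t₀ + h^k), a₁ ≤ C(p₁ + b₀² + h^k), s₁ ≤ C(h·a₁ + b₀·t₀ + h^{k+1}), q₁ ≤ C(h·a₁ + s₁ + h^k), and b₁ ≤ C(q₁ + a₁·b₀ + h^k), one has q₁ + b₁ ≤ C″·h^k; that is, under the scaling h = H³ (k = 1) or h = H^{5/2} (k = 2), the final-step two-level energy errors are of the same (optimal) order h^k as the finite element error on the fine mesh. -/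
/-!
Every error is of the form `C^j · H^m`: the intermediate errors `p₁, a₁` are
`O(H^(k+1))` and the final errors `s₁, q₁, b₁` are `O(H^(2k+1))`. The latter order is `h^k`
precisely because `h^k = H^(2k+1)`, and the term `h · a₁` stays at that order because
`h ≤ H^k`, which for `h = H^((2k+1)/k)` and `H ≤ 1` holds exactly when `k ≤ 2`.
-/

section ErrorRecursion

variable {k : ℕ} {C H h b₀ t₀ p₁ a₁ s₁ q₁ b₁ : ℝ}

theorem intermediate_error_le (hk : 1 ≤ k) (hC : 1 ≤ C) (hH0 : 0 ≤ H) (hH1 : H ≤ 1)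
    (hhk : h ^ k ≤ H ^ (2 * k + 1)) (hb₀0 : 0 ≤ b₀)
    (hb₀ : b₀ ≤ C * H ^ k) (ht₀ : t₀ ≤ C * H ^ (k + 1))
    (hp : p₁ ≤ C * (H * b₀ + t₀ + h ^ k)) (ha : a₁ ≤ C * (p₁ + b₀ ^ 2 + h ^ k)) :
    a₁ ≤ 5 * C ^ 3 * H ^ (k + 1) := by
  set ε := H ^ (k + 1)
  have hhk' : h ^ k ≤ ε := hhk.trans (pow_le_pow_of_le_one hH0 hH1 (by omega))
  have hb₀sq : b₀ ^ 2 ≤ C ^ 2 * ε := calc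
    b₀ ^ 2 ≤ (C * H ^ k) ^ 2 := by gcongr
    _ = C ^ 2 * H ^ (2 * k) := by ring
    _ ≤ C ^ 2 * ε := by
      gcongr C ^ 2 * ?_
      exact pow_le_pow_of_le_one hH0 hH1 (by omega)
  have hp' : p₁ ≤ 3 * C ^ 2 * ε := calc
    p₁ ≤ C * (H * (C * H ^ k) + C * ε + C * ε) := by
      refine hp.trans ?_
      gcongr
      exact hhk'.trans (le_mul_of_one_le_left (by positivity) hC)
    _ = 3 * C ^ 2 * ε := by ring
  calc a₁ ≤ C * (3 * C ^ 2 * ε + C ^ 2 * ε + C ^ 2 * ε) := by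
        refine ha.trans ?_
        gcongr
        exact hhk'.trans (le_mul_of_one_le_left (by positivity) (one_le_pow₀ hC))
    _ = 5 * C ^ 3 * ε := by ring

theorem final_error_le (hC : 1 ≤ C) (hH0 : 0 ≤ H) (hH1 : H ≤ 1) (hh0 : 0 ≤ h)
    (hhH : h ≤ H ^ k) (hhk : h ^ k ≤ H ^ (2 * k + 1)) (hb₀0 : 0 ≤ b₀) (ht₀0 : 0 ≤ t₀)
    (ha0 : 0 ≤ a₁) (hb₀ : b₀ ≤ C * H ^ k) (ht₀ : t₀ ≤ C * H ^ (k + 1))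
    (ha : a₁ ≤ 5 * C ^ 3 * H ^ (k + 1))
    (hs : s₁ ≤ C * (h * a₁ + b₀ * t₀ + h ^ (k + 1))) (hq : q₁ ≤ C * (h * a₁ + s₁ + h ^ k))
    (hb : b₁ ≤ C * (q₁ + a₁ * b₀ + h ^ k)) :
    q₁ + b₁ ≤ 32 * C ^ 6 * H ^ (2 * k + 1) := by
  set δ := H ^ (2 * k + 1)
  have hC0 : 0 ≤ C := zero_le_one.trans hC
  have hδ : ∀ j : ℕ, h ^ k ≤ C ^ j * δ := fun j ↦
    hhk.trans (le_mul_of_one_le_left (by positivity) (one_le_pow₀ hC))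
  have hha : h * a₁ ≤ 5 * C ^ 3 * δ := calc
    h * a₁ ≤ H ^ k * (5 * C ^ 3 * H ^ (k + 1)) := by gcongr
    _ = 5 * C ^ 3 * δ := by ring
  have hbt : b₀ * t₀ ≤ C ^ 2 * δ := calc
    b₀ * t₀ ≤ C * H ^ k * (C * H ^ (k + 1)) := by gcongr
    _ = C ^ 2 * δ := by ring
  have hab : a₁ * b₀ ≤ 5 * C ^ 4 * δ := calc
    a₁ * b₀ ≤ 5 * C ^ 3 * H ^ (k + 1) * (C * H ^ k) := by gcongr
    _ = 5 * C ^ 4 * δ := by ring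
  have hhk1 : h ^ (k + 1) ≤ h ^ k :=
    pow_le_pow_of_le_one hh0 (hhH.trans (pow_le_one₀ hH0 hH1)) (by omega)
  have hs' : s₁ ≤ 7 * C ^ 4 * δ := calc
    s₁ ≤ C * (5 * C ^ 3 * δ + C ^ 3 * δ + C ^ 3 * δ) := by
      refine hs.trans (mul_le_mul_of_nonneg_left (add_le_add_three hha ?_ ?_) hC0)
      · exact hbt.trans (by gcongr; norm_num)
      · exact hhk1.trans (hδ 3)
    _ = 7 * C ^ 4 * δ := by ring
  have hq' : q₁ ≤ 13 * C ^ 5 * δ := calc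
    q₁ ≤ C * (5 * C ^ 4 * δ + 7 * C ^ 4 * δ + C ^ 4 * δ) := by
      refine hq.trans (mul_le_mul_of_nonneg_left (add_le_add_three ?_ hs' (hδ 4)) hC0)
      exact hha.trans (by gcongr; norm_num)
    _ = 13 * C ^ 5 * δ := by ring
  have hb' : b₁ ≤ 19 * C ^ 6 * δ := calc
    b₁ ≤ C * (13 * C ^ 5 * δ + 5 * C ^ 5 * δ + C ^ 5 * δ) := by
      refine hb.trans (mul_le_mul_of_nonneg_left (add_le_add_three hq' ?_ (hδ 5)) hC0)
      exact hab.trans (by gcongr; norm_num)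
    _ = 19 * C ^ 6 * δ := by ring
  calc q₁ + b₁ ≤ 13 * C ^ 6 * δ + 19 * C ^ 6 * δ :=
        add_le_add (hq'.trans (by gcongr; norm_num)) hb'
    _ = 32 * C ^ 6 * δ := by ring

end ErrorRecursion

section Scaling

variable {k : ℕ} {H : ℝ}

theorem rpow_two_mul_add_one_div_pow (hk : k ≠ 0) (hH : 0 ≤ H) :
    (H ^ ((2 * (k : ℝ) + 1) / k)) ^ k = H ^ (2 * k + 1) := by
  rw [← Real.rpow_mul_natCast hH, div_mul_cancel₀ _ (Nat.cast_ne_zero.mpr hk)]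
  exact_mod_cast Real.rpow_natCast H (2 * k + 1)

theorem rpow_two_mul_add_one_div_le_pow (hk1 : 1 ≤ k) (hk2 : k ≤ 2) (hH0 : 0 < H)
    (hH1 : H ≤ 1) :
    H ^ ((2 * (k : ℝ) + 1) / k) ≤ H ^ k := by
  rw [← Real.rpow_natCast H k]
  refine Real.rpow_le_rpow_of_exponent_ge hH0 hH1 ?_
  rw [le_div_iff₀ (by positivity)]
  interval_cases k <;> norm_num

end Scaling

/-- Two-level decoupled Algorithm A (Lemma 4.1 and the following Remark):
under the scaling `h = H^((2k+1)/k)` (i.e. `h = H³` for `k = 1`, `h = H^(5/2)`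
for `k = 2`), the final-step two-level energy errors are of the optimal order
`h^k`. -/
theorem two_level_optimal_scaling (k : ℕ) (hk : k = 1 ∨ k = 2) (C : ℝ) (hC : 1 ≤ C) :
    ∃ C'' : ℝ, ∀ H h b₀ t₀ p₁ a₁ s₁ q₁ b₁ : ℝ,
      0 < H → H ≤ 1 →
      h = H ^ ((2 * (k : ℝ) + 1) / k) →
      0 ≤ b₀ → 0 ≤ t₀ → 0 ≤ p₁ → 0 ≤ a₁ → 0 ≤ s₁ → 0 ≤ q₁ → 0 ≤ b₁ →
      b₀ ≤ C * H ^ k →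
      t₀ ≤ C * H ^ (k + 1) →
      p₁ ≤ C * (H * b₀ + t₀ + h ^ k) →
      a₁ ≤ C * (p₁ + b₀ ^ 2 + h ^ k) →
      s₁ ≤ C * (h * a₁ + b₀ * t₀ + h ^ (k + 1)) →
      q₁ ≤ C * (h * a₁ + s₁ + h ^ k) →
      b₁ ≤ C * (q₁ + a₁ * b₀ + h ^ k) →
      q₁ + b₁ ≤ C'' * h ^ k := by
  refine ⟨32 * C ^ 6, ?_⟩
  intro H h b₀ t₀ p₁ a₁ s₁ q₁ b₁ hH0 hH1 hh hb₀0 ht₀0 _ ha0 _ _ _ hb₀ ht₀ hp ha hs hq hb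
  have hk1 : 1 ≤ k := by omega
  have hhk : h ^ k = H ^ (2 * k + 1) := hh ▸ rpow_two_mul_add_one_div_pow (by omega) hH0.le
  have hhH : h ≤ H ^ k := hh ▸ rpow_two_mul_add_one_div_le_pow hk1 (by omega) hH0 hH1
  have hh0 : 0 ≤ h := hh ▸ by positivity
  have ha' := intermediate_error_le hk1 hC hH0.le hH1 hhk.le hb₀0 hb₀ ht₀ hp ha
  rw [hhk]
  exact final_error_le hC hH0.le hH1 hh0 hhH hhk.le hb₀0 ht₀0 ha0 hb₀ ht₀ ha' hs hq hb
end

section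
/- Let k = 2, let C ≥ 1, and let L ≥ 1 be an integer. There exists a constant C′ depending only on C and L such that the following holds. Let (h_l)_{l=0}^{L} satisfy 0 < h₀ ≤ 1 and h_l = h_{l-1}² for 1 ≤ l ≤ L, and let nonnegative reals b₀, t₀ and (p_l, a_l, s_l, q_l, b_l, t_l)_{l=1}^{L} satisfy b₀ ≤ C·h₀², t₀ ≤ C·h₀³, and for every 1 ≤ l ≤ L: p_l ≤ C(h_{l-1}·b_{l-1} + t_{l-1} + h_l²), a_l ≤ C(p_l + b_{l-1}² + h_l²), s_l ≤ C(h_l·a_l + b_{l-1}·t_{l-1} + h_l³), q_l ≤ C(h_l·a_l + s_l + h_l²), b_l ≤ C(q_l + a_l·b_{l-1} + h_l²), t_l ≤ C(h_l·b_l + h_l·b_{l-1}·a_l + t_{l-1}·a_l + h_l³). Then for every 1 ≤ l ≤ L: p_l ≤ C′(h_l² + h_{l-1}³), a_l ≤ C′(h_l² + h_{l-1}³), s_l ≤ C′(h_l³ + h_l·h_{l-1}³), q_l ≤ C′·h_l², b_l ≤ C′·h_l², and t_l ≤ C′·h_l³. -/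
set_option maxHeartbeats 1000000

private lemma ml_one_le_CB (C B : ℝ) (hC : 1 ≤ C) (hB : 1 ≤ B) :
    ∀ i j : ℕ, (1:ℝ) ≤ C ^ i * B ^ j := by
  intro i j
  have h1 : (1:ℝ) ≤ C ^ i := by
    calc (1:ℝ) = 1 ^ i := (one_pow i).symm
    _ ≤ C ^ i := pow_le_pow_left₀ zero_le_one hC i
  have h2 : (1:ℝ) ≤ B ^ j := by
    calc (1:ℝ) = 1 ^ j := (one_pow j).symm
    _ ≤ B ^ j := pow_le_pow_left₀ zero_le_one hB j
  calc (1:ℝ) ≤ C ^ i := h1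
  _ ≤ C ^ i * B ^ j := le_mul_of_one_le_right (by positivity) h2

private lemma ml_step (C B H p a s q b t b' t' : ℝ)
    (hC : 1 ≤ C) (hB : 1 ≤ B)
    (hH : 0 < H) (hH1 : H ≤ 1)
    (hb' : 0 ≤ b') (ht' : 0 ≤ t') (ha0 : 0 ≤ a)
    (hbB : b' ≤ B * H ^ 2) (htB : t' ≤ B * H ^ 3)
    (hp : p ≤ C * (H * b' + t' + (H ^ 2) ^ 2))
    (ha : a ≤ C * (p + b' ^ 2 + (H ^ 2) ^ 2))
    (hs : s ≤ C * (H ^ 2 * a + b' * t' + (H ^ 2) ^ 3))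
    (hq : q ≤ C * (H ^ 2 * a + s + (H ^ 2) ^ 2))
    (hb : b ≤ C * (q + a * b' + (H ^ 2) ^ 2))
    (ht : t ≤ C * (H ^ 2 * b + H ^ 2 * b' * a + t' * a + (H ^ 2) ^ 3)) :
    p ≤ 4 * (3 * C * B) ^ 6 * ((H ^ 2) ^ 2 + H ^ 3) ∧
    a ≤ 4 * (3 * C * B) ^ 6 * ((H ^ 2) ^ 2 + H ^ 3) ∧
    s ≤ 4 * (3 * C * B) ^ 6 * ((H ^ 2) ^ 3 + H ^ 2 * H ^ 3) ∧
    q ≤ 4 * (3 * C * B) ^ 6 * (H ^ 2) ^ 2 ∧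
    b ≤ 4 * (3 * C * B) ^ 6 * (H ^ 2) ^ 2 ∧
    t ≤ 4 * (3 * C * B) ^ 6 * (H ^ 2) ^ 3 := by
  have hH0 : 0 ≤ H := hH.le
  have hC0 : 0 ≤ C := by linarith
  have hB0 : 0 ≤ B := by linarith
  have hHp : ∀ n : ℕ, 0 ≤ H ^ n := fun n => pow_nonneg hH0 n
  have hHd : ∀ n : ℕ, H ^ (n + 1) ≤ H ^ n := fun n => by
    calc H ^ (n + 1) = H ^ n * H := by ring
    _ ≤ H ^ n * 1 := by exact mul_le_mul_of_nonneg_left hH1 (hHp n)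
    _ = H ^ n := mul_one _
  have h43 : H ^ 4 ≤ H ^ 3 := hHd 3
  have h54 : H ^ 5 ≤ H ^ 4 := hHd 4
  have h65 : H ^ 6 ≤ H ^ 5 := hHd 5
  have h76 : H ^ 7 ≤ H ^ 6 := hHd 6
  have h87 : H ^ 8 ≤ H ^ 7 := hHd 7
  have hone := ml_one_le_CB C B hC hB
  have hB1 : (0:ℝ) ≤ B - 1 := by linarith
  -- P1 : p ≤ 3CB(H^4+H^3)
  have e1 : H * b' ≤ B * H ^ 3 := by linarith [mul_le_mul_of_nonneg_left hbB hH0]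
  have hpin : H * b' + t' + (H ^ 2) ^ 2 ≤ 2 * (B * H ^ 3) + H ^ 4 := by linarith [htB]
  have P1 : p ≤ 3 * C * B * (H ^ 4 + H ^ 3) := by
    have := le_trans hp (mul_le_mul_of_nonneg_left hpin hC0)
    linarith [mul_nonneg (mul_nonneg hC0 hB0) (hHp 3),
      mul_nonneg (mul_nonneg hC0 hB1) (hHp 4),
      mul_nonneg (mul_nonneg hC0 hB0) (hHp 4)]
  -- P2 : a ≤ 18 C²B² (H^4+H^3)
  have hb2 : b' ^ 2 ≤ B ^ 2 * H ^ 4 := by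
    have := pow_le_pow_left₀ hb' hbB 2
    linarith [this]
  have hain : p + b' ^ 2 + (H ^ 2) ^ 2 ≤
      3 * C * B * (H ^ 4 + H ^ 3) + B ^ 2 * H ^ 4 + H ^ 4 := by linarith [P1, hb2]
  have P2 : a ≤ 18 * C ^ 2 * B ^ 2 * (H ^ 4 + H ^ 3) := by
    have := le_trans ha (mul_le_mul_of_nonneg_left hain hC0)
    linarith [mul_nonneg (mul_nonneg (by positivity : (0:ℝ) ≤ C ^ 2 * B) hB1) (hHp 4),
      mul_nonneg (mul_nonneg (by positivity : (0:ℝ) ≤ C * B ^ 2) (by linarith [hC] : (0:ℝ) ≤ C - 1)) (hHp 4),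
      mul_nonneg (mul_nonneg hC0 (by linarith [hone 1 2] : (0:ℝ) ≤ C * B ^ 2 - 1)) (hHp 4),
      mul_nonneg (mul_nonneg (by positivity : (0:ℝ) ≤ C ^ 2 * B) hB1) (hHp 3),
      mul_nonneg (by positivity : (0:ℝ) ≤ C ^ 2 * B ^ 2) (hHp 3),
      mul_nonneg (by positivity : (0:ℝ) ≤ C ^ 2 * B ^ 2) (hHp 4)]
  have P2nn : (0:ℝ) ≤ 18 * C ^ 2 * B ^ 2 * (H ^ 4 + H ^ 3) := by positivity
  -- P3 : s ≤ 54 C³B³ (H^6+H^5)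
  have e2 : H ^ 2 * a ≤ 18 * C ^ 2 * B ^ 2 * (H ^ 6 + H ^ 5) := by
    linarith [mul_le_mul_of_nonneg_left P2 (hHp 2)]
  have e3 : b' * t' ≤ B ^ 2 * H ^ 5 := by
    linarith [mul_le_mul hbB htB ht' (by positivity : (0:ℝ) ≤ B * H ^ 2)]
  have hsin : H ^ 2 * a + b' * t' + (H ^ 2) ^ 3 ≤
      18 * C ^ 2 * B ^ 2 * (H ^ 6 + H ^ 5) + B ^ 2 * H ^ 5 + H ^ 6 := by linarith [e2, e3]
  have P3 : s ≤ 54 * C ^ 3 * B ^ 3 * (H ^ 6 + H ^ 5) := by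
    have := le_trans hs (mul_le_mul_of_nonneg_left hsin hC0)
    linarith [mul_nonneg (mul_nonneg (by positivity : (0:ℝ) ≤ C ^ 3 * B ^ 2) hB1) (hHp 6),
      mul_nonneg (mul_nonneg hC0 (by linarith [hone 2 3] : (0:ℝ) ≤ C ^ 2 * B ^ 3 - 1)) (hHp 6),
      mul_nonneg (mul_nonneg (by positivity : (0:ℝ) ≤ C ^ 3 * B ^ 2) hB1) (hHp 5),
      mul_nonneg (mul_nonneg (by positivity : (0:ℝ) ≤ C * B ^ 2) (by linarith [hone 2 1] : (0:ℝ) ≤ C ^ 2 * B - 1)) (hHp 5),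
      mul_nonneg (by positivity : (0:ℝ) ≤ C ^ 3 * B ^ 3) (hHp 5),
      mul_nonneg (by positivity : (0:ℝ) ≤ C ^ 3 * B ^ 3) (hHp 6)]
  -- P4 : q ≤ 324 C⁴B⁴ H^4
  have hqin : H ^ 2 * a + s + (H ^ 2) ^ 2 ≤
      (36 * C ^ 2 * B ^ 2 + 108 * C ^ 3 * B ^ 3 + 1) * H ^ 4 := by
    linarith [e2, P3, mul_nonneg (by positivity : (0:ℝ) ≤ C ^ 2 * B ^ 2) (by linarith : (0:ℝ) ≤ H ^ 4 - H ^ 6),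
      mul_nonneg (by positivity : (0:ℝ) ≤ C ^ 2 * B ^ 2) (by linarith : (0:ℝ) ≤ H ^ 4 - H ^ 5),
      mul_nonneg (by positivity : (0:ℝ) ≤ C ^ 3 * B ^ 3) (by linarith : (0:ℝ) ≤ H ^ 4 - H ^ 6),
      mul_nonneg (by positivity : (0:ℝ) ≤ C ^ 3 * B ^ 3) (by linarith : (0:ℝ) ≤ H ^ 4 - H ^ 5)]
  have P4 : q ≤ 324 * C ^ 4 * B ^ 4 * H ^ 4 := by
    have := le_trans hq (mul_le_mul_of_nonneg_left hqin hC0)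
    linarith [mul_nonneg (mul_nonneg (by positivity : (0:ℝ) ≤ C ^ 4 * B ^ 3) hB1) (hHp 4),
      mul_nonneg (mul_nonneg (by positivity : (0:ℝ) ≤ C ^ 3 * B ^ 2) (by linarith [hone 1 2] : (0:ℝ) ≤ C * B ^ 2 - 1)) (hHp 4),
      mul_nonneg (mul_nonneg hC0 (by linarith [hone 3 4] : (0:ℝ) ≤ C ^ 3 * B ^ 4 - 1)) (hHp 4),
      mul_nonneg (by positivity : (0:ℝ) ≤ C ^ 4 * B ^ 4) (hHp 4)]
  -- P5 : b ≤ 972 C⁵B⁵ H^4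
  have e4 : a * b' ≤ 36 * C ^ 2 * B ^ 3 * H ^ 4 := by
    have h1 := mul_le_mul P2 hbB hb' P2nn
    linarith [h1, mul_nonneg (by positivity : (0:ℝ) ≤ C ^ 2 * B ^ 3) (by linarith : (0:ℝ) ≤ H ^ 4 - H ^ 6),
      mul_nonneg (by positivity : (0:ℝ) ≤ C ^ 2 * B ^ 3) (by linarith : (0:ℝ) ≤ H ^ 4 - H ^ 5)]
  have hbin : q + a * b' + (H ^ 2) ^ 2 ≤
      (324 * C ^ 4 * B ^ 4 + 36 * C ^ 2 * B ^ 3 + 1) * H ^ 4 := by linarith [P4, e4]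
  have P5 : b ≤ 972 * C ^ 5 * B ^ 5 * H ^ 4 := by
    have := le_trans hb (mul_le_mul_of_nonneg_left hbin hC0)
    linarith [mul_nonneg (mul_nonneg (by positivity : (0:ℝ) ≤ C ^ 5 * B ^ 4) hB1) (hHp 4),
      mul_nonneg (mul_nonneg (by positivity : (0:ℝ) ≤ C ^ 3 * B ^ 3) (by linarith [hone 2 2] : (0:ℝ) ≤ C ^ 2 * B ^ 2 - 1)) (hHp 4),
      mul_nonneg (mul_nonneg hC0 (by linarith [hone 4 5] : (0:ℝ) ≤ C ^ 4 * B ^ 5 - 1)) (hHp 4),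
      mul_nonneg (by positivity : (0:ℝ) ≤ C ^ 5 * B ^ 5) (hHp 4)]
  -- P6 : t ≤ 2916 C⁶B⁶ H^6
  have e5 : H ^ 2 * b ≤ 972 * C ^ 5 * B ^ 5 * H ^ 6 := by
    linarith [mul_le_mul_of_nonneg_left P5 (hHp 2)]
  have e6 : H ^ 2 * b' * a ≤ 36 * C ^ 2 * B ^ 3 * H ^ 6 := by
    have h1 := mul_le_mul hbB P2 ha0 (by positivity : (0:ℝ) ≤ B * H ^ 2)
    have h2 := mul_le_mul_of_nonneg_left h1 (hHp 2)
    linarith [h2, mul_nonneg (by positivity : (0:ℝ) ≤ C ^ 2 * B ^ 3) (by linarith : (0:ℝ) ≤ H ^ 6 - H ^ 8),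
      mul_nonneg (by positivity : (0:ℝ) ≤ C ^ 2 * B ^ 3) (by linarith : (0:ℝ) ≤ H ^ 6 - H ^ 7)]
  have e7 : t' * a ≤ 36 * C ^ 2 * B ^ 3 * H ^ 6 := by
    have h1 := mul_le_mul htB P2 ha0 (by positivity : (0:ℝ) ≤ B * H ^ 3)
    linarith [h1, mul_nonneg (by positivity : (0:ℝ) ≤ C ^ 2 * B ^ 3) (by linarith : (0:ℝ) ≤ H ^ 6 - H ^ 7)]
  have htin : H ^ 2 * b + H ^ 2 * b' * a + t' * a + (H ^ 2) ^ 3 ≤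
      (972 * C ^ 5 * B ^ 5 + 72 * C ^ 2 * B ^ 3 + 1) * H ^ 6 := by linarith [e5, e6, e7]
  have P6 : t ≤ 2916 * C ^ 6 * B ^ 6 * H ^ 6 := by
    have := le_trans ht (mul_le_mul_of_nonneg_left htin hC0)
    linarith [mul_nonneg (mul_nonneg (by positivity : (0:ℝ) ≤ C ^ 6 * B ^ 5) hB1) (hHp 6),
      mul_nonneg (mul_nonneg (by positivity : (0:ℝ) ≤ C ^ 3 * B ^ 3) (by linarith [hone 3 3] : (0:ℝ) ≤ C ^ 3 * B ^ 3 - 1)) (hHp 6),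
      mul_nonneg (mul_nonneg hC0 (by linarith [hone 5 6] : (0:ℝ) ≤ C ^ 5 * B ^ 6 - 1)) (hHp 6),
      mul_nonneg (by positivity : (0:ℝ) ≤ C ^ 6 * B ^ 6) (hHp 6)]
  -- conclusions
  have hKK : (4:ℝ) * (3 * C * B) ^ 6 = 2916 * C ^ 6 * B ^ 6 := by ring
  refine ⟨?_, ?_, ?_, ?_, ?_, ?_⟩
  · rw [hKK]
    refine le_trans P1 ?_
    have : ((H ^ 2) ^ 2 + H ^ 3) = H ^ 4 + H ^ 3 := by ring
    rw [this]
    exact mul_le_mul_of_nonneg_right (by linarith [mul_nonneg (mul_nonneg hC0 hB0) (by linarith [hone 5 5] : (0:ℝ) ≤ C ^ 5 * B ^ 5 - 1), mul_nonneg hC0 hB0]) (by positivity)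
  · rw [hKK]
    refine le_trans P2 ?_
    have : ((H ^ 2) ^ 2 + H ^ 3) = H ^ 4 + H ^ 3 := by ring
    rw [this]
    exact mul_le_mul_of_nonneg_right (by linarith [mul_nonneg (by positivity : (0:ℝ) ≤ C ^ 2 * B ^ 2) (by linarith [hone 4 4] : (0:ℝ) ≤ C ^ 4 * B ^ 4 - 1), (by positivity : (0:ℝ) ≤ C ^ 2 * B ^ 2)]) (by positivity)
  · rw [hKK]
    refine le_trans P3 ?_
    have : ((H ^ 2) ^ 3 + H ^ 2 * H ^ 3) = H ^ 6 + H ^ 5 := by ring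
    rw [this]
    exact mul_le_mul_of_nonneg_right (by linarith [mul_nonneg (by positivity : (0:ℝ) ≤ C ^ 3 * B ^ 3) (by linarith [hone 3 3] : (0:ℝ) ≤ C ^ 3 * B ^ 3 - 1), (by positivity : (0:ℝ) ≤ C ^ 3 * B ^ 3)]) (by positivity)
  · rw [hKK]
    refine le_trans P4 ?_
    have : ((H ^ 2) ^ 2 : ℝ) = H ^ 4 := by ring
    rw [this]
    exact mul_le_mul_of_nonneg_right (by linarith [mul_nonneg (by positivity : (0:ℝ) ≤ C ^ 4 * B ^ 4) (by linarith [hone 2 2] : (0:ℝ) ≤ C ^ 2 * B ^ 2 - 1), (by positivity : (0:ℝ) ≤ C ^ 4 * B ^ 4)]) (hHp 4)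
  · rw [hKK]
    refine le_trans P5 ?_
    have : ((H ^ 2) ^ 2 : ℝ) = H ^ 4 := by ring
    rw [this]
    exact mul_le_mul_of_nonneg_right (by linarith [mul_nonneg (by positivity : (0:ℝ) ≤ C ^ 5 * B ^ 5) (by linarith [hone 1 1] : (0:ℝ) ≤ C * B - 1), (by positivity : (0:ℝ) ≤ C ^ 5 * B ^ 5)]) (hHp 4)
  · rw [hKK]
    refine le_trans P6 ?_
    have : ((H ^ 2) ^ 3 : ℝ) = H ^ 6 := by ring
    rw [this]

private noncomputable def mlK (C : ℝ) : ℕ → ℝ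
  | 0 => C
  | n + 1 => 4 * (3 * C * mlK C n) ^ 6

private lemma mlK_one_le (C : ℝ) (hC : 1 ≤ C) : ∀ n, 1 ≤ mlK C n := by
  intro n
  induction n with
  | zero => exact hC
  | succ m ih =>
    have h1 : (1:ℝ) ≤ 3 * C * mlK C m := by nlinarith
    have h2 : (1:ℝ) ≤ (3 * C * mlK C m) ^ 6 := by
      calc (1:ℝ) = 1 ^ 6 := by norm_num
      _ ≤ (3 * C * mlK C m) ^ 6 := pow_le_pow_left₀ zero_le_one h1 6
    show (1:ℝ) ≤ 4 * (3 * C * mlK C m) ^ 6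
    linarith

private lemma mlK_mono (C : ℝ) (hC : 1 ≤ C) : Monotone (mlK C) := by
  apply monotone_nat_of_le_succ
  intro n
  have hK := mlK_one_le C hC n
  have h1 : mlK C n ≤ 3 * C * mlK C n := by nlinarith
  have h2 : mlK C n ≤ (mlK C n) ^ 6 := le_self_pow₀ (by linarith) (by norm_num)
  have h3 : (mlK C n) ^ 6 ≤ (3 * C * mlK C n) ^ 6 :=
    pow_le_pow_left₀ (by linarith) h1 6
  have h4 : (0:ℝ) ≤ (3 * C * mlK C n) ^ 6 := by positivity
  show mlK C n ≤ 4 * (3 * C * mlK C n) ^ 6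
  linarith

/-- Abstract error-propagation system for the multilevel decoupled Algorithm A
with second-order (`k = 2`) discretization (inductive content of Theorem 4.2):
with the scaling `h_l = h_{l-1}²`, the multilevel errors are of optimal order. -/
theorem multilevel_error_estimates_second_order (C : ℝ) (hC : 1 ≤ C)
    (L : ℕ) (hL : 1 ≤ L) :
    ∃ C' : ℝ, ∀ h p a s q b t : ℕ → ℝ,
      (0 < h 0) → (h 0 ≤ 1) →
      (∀ l, 1 ≤ l → l ≤ L → h l = (h (l - 1)) ^ 2) →
      (0 ≤ b 0) → (0 ≤ t 0) →
      (∀ l, 1 ≤ l → l ≤ L →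
        0 ≤ p l ∧ 0 ≤ a l ∧ 0 ≤ s l ∧ 0 ≤ q l ∧ 0 ≤ b l ∧ 0 ≤ t l) →
      (b 0 ≤ C * (h 0) ^ 2) → (t 0 ≤ C * (h 0) ^ 3) →
      (∀ l, 1 ≤ l → l ≤ L →
        p l ≤ C * (h (l - 1) * b (l - 1) + t (l - 1) + (h l) ^ 2) ∧
        a l ≤ C * (p l + (b (l - 1)) ^ 2 + (h l) ^ 2) ∧
        s l ≤ C * (h l * a l + b (l - 1) * t (l - 1) + (h l) ^ 3) ∧
        q l ≤ C * (h l * a l + s l + (h l) ^ 2) ∧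
        b l ≤ C * (q l + a l * b (l - 1) + (h l) ^ 2) ∧
        t l ≤ C * (h l * b l + h l * b (l - 1) * a l + t (l - 1) * a l + (h l) ^ 3)) →
      ∀ l, 1 ≤ l → l ≤ L →
        p l ≤ C' * ((h l) ^ 2 + (h (l - 1)) ^ 3) ∧
        a l ≤ C' * ((h l) ^ 2 + (h (l - 1)) ^ 3) ∧
        s l ≤ C' * ((h l) ^ 3 + h l * (h (l - 1)) ^ 3) ∧
        q l ≤ C' * (h l) ^ 2 ∧
        b l ≤ C' * (h l) ^ 2 ∧
        t l ≤ C' * (h l) ^ 3 := by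
  refine ⟨mlK C L, ?_⟩
  intro h p a s q b t h0pos h0le hrec hb0 ht0 hnn hb0C ht0C hrec6
  have hfacts : ∀ l, l ≤ L → 0 < h l ∧ h l ≤ 1 := by
    intro l
    induction l with
    | zero => intro _; exact ⟨h0pos, h0le⟩
    | succ n ih =>
      intro hle
      have hn := ih (by omega)
      have he := hrec (n + 1) (by omega) hle
      simp only [Nat.add_sub_cancel] at he
      refine ⟨by rw [he]; exact pow_pos hn.1 2, by rw [he]; nlinarith [hn.1, hn.2]⟩
  have hbtnn : ∀ l, l ≤ L → 0 ≤ b l ∧ 0 ≤ t l := by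
    intro l hle
    match l with
    | 0 => exact ⟨hb0, ht0⟩
    | n + 1 =>
      have := hnn (n + 1) (by omega) hle
      exact ⟨this.2.2.2.2.1, this.2.2.2.2.2⟩
  have key : ∀ l, l ≤ L →
      b l ≤ mlK C l * (h l) ^ 2 ∧ t l ≤ mlK C l * (h l) ^ 3 ∧ (1 ≤ l →
        p l ≤ mlK C l * ((h l) ^ 2 + (h (l - 1)) ^ 3) ∧
        a l ≤ mlK C l * ((h l) ^ 2 + (h (l - 1)) ^ 3) ∧
        s l ≤ mlK C l * ((h l) ^ 3 + h l * (h (l - 1)) ^ 3) ∧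
        q l ≤ mlK C l * (h l) ^ 2) := by
    intro l
    induction l with
    | zero => intro _; exact ⟨hb0C, ht0C, by omega⟩
    | succ n ih =>
      intro hle
      have hnL : n ≤ L := by omega
      obtain ⟨ihb, iht, -⟩ := ih hnL
      have hH := hfacts n hnL
      have he := hrec (n + 1) (by omega) hle
      simp only [Nat.add_sub_cancel] at he
      obtain ⟨hp1, ha1, hs1, hq1, hb1, ht1⟩ := hrec6 (n + 1) (by omega) hle
      simp only [Nat.add_sub_cancel] at hp1 ha1 hs1 hq1 hb1 ht1
      rw [he] at hp1 ha1 hs1 hq1 hb1 ht1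
      have hann := (hnn (n + 1) (by omega) hle).2.1
      have hbt := hbtnn n hnL
      have R := ml_step C (mlK C n) (h n) (p (n + 1)) (a (n + 1)) (s (n + 1))
        (q (n + 1)) (b (n + 1)) (t (n + 1)) (b n) (t n)
        hC (mlK_one_le C hC n) hH.1 hH.2 hbt.1 hbt.2 hann ihb iht
        hp1 ha1 hs1 hq1 hb1 ht1
      have e : mlK C (n + 1) = 4 * (3 * C * mlK C n) ^ 6 := rfl
      refine ⟨?_, ?_, fun _ => ⟨?_, ?_, ?_, ?_⟩⟩ <;> (try simp only [Nat.add_sub_cancel]) <;> rw [e, he]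

      · exact R.2.2.2.2.1
      · exact R.2.2.2.2.2
      · exact R.1
      · exact R.2.1
      · exact R.2.2.1
      · exact R.2.2.2.1
  intro l hl1 hlL
  obtain ⟨hbL, htL, hrest⟩ := key l hlL
  obtain ⟨hpL, haL, hsL, hqL⟩ := hrest hl1
  have hmono : mlK C l ≤ mlK C L := mlK_mono C hC hlL
  have h1 := (hfacts l hlL).1.le
  have h2 := (hfacts (l - 1) (by omega)).1.le
  have n1 : (0:ℝ) ≤ (h l) ^ 2 + (h (l - 1)) ^ 3 :=
    add_nonneg (pow_nonneg h1 2) (pow_nonneg h2 3)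
  have n2 : (0:ℝ) ≤ (h l) ^ 3 + h l * (h (l - 1)) ^ 3 :=
    add_nonneg (pow_nonneg h1 3) (mul_nonneg h1 (pow_nonneg h2 3))
  exact ⟨le_trans hpL (mul_le_mul_of_nonneg_right hmono n1),
    le_trans haL (mul_le_mul_of_nonneg_right hmono n1),
    le_trans hsL (mul_le_mul_of_nonneg_right hmono n2),
    le_trans hqL (mul_le_mul_of_nonneg_right hmono (pow_nonneg h1 2)),
    le_trans hbL (mul_le_mul_of_nonneg_right hmono (pow_nonneg h1 2)),
    le_trans htL (mul_le_mul_of_nonneg_right hmono (pow_nonneg h1 3))⟩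
end
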